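/- Let X be a metric space, x ∈ X, φ : X → ℝⁿ Lipschitz with Lip(⟨v,φ⟩; x) > 0 for all nonzero v ∈ ℝⁿ, Y a Banach space, and f : X → Y a function. If for every ε > 0 there is a linear map T_ε : ℝⁿ → Y with Lip(f − T_ε∘φ; x) ≤ ε, then there is a unique linear T : ℝⁿ → Y with Lip(f − T∘φ; x) = 0. -/

import Mathlib

open Filter
open scoped ENNReal NNReal Topology

/-- The pointwise Lipschitz constant `Lip(f; x)`. -/
noncomputable def pLip {X Y : Type*} [MetricSpace X] [MetricSpace Y]
    (f : X → Y) (x : X) : ℝ≥0∞ :=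
  Filter.limsup (fun y => edist (f x) (f y) / edist x y) (𝓝[≠] x)

/-!
Nondegeneracy and compactness of the unit sphere of the dual give `c > 0` with
`c ‖ℓ‖ ≤ Lip(ℓ ∘ φ; x)` for every functional `ℓ`; testing against norming functionals upgrades
this to `c ‖T‖ ≤ Lip(T ∘ φ; x)` for every operator `T`. By subadditivity of `Lip`, any two operators
satisfy `c ‖S - T‖ ≤ Lip(f - S ∘ φ; x) + Lip(f - T ∘ φ; x)`, so approximate derivatives `T_ε`
form a Cauchy sequence in the Banach space of operators, and the same inequality gives uniqueness.
The limit is exact because `T ↦ Lip(f - T ∘ φ; x)` is `K`-Lipschitz, hence continuous.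
-/

-- Unlike `ENNReal.limsup_add_le`, no `CountableInterFilter` assumption, which `𝓝[≠] x` lacks.
theorem ENNReal.limsup_add_le' {α : Type*} {f : Filter α} (u v : α → ℝ≥0∞) :
    limsup (u + v) f ≤ limsup u f + limsup v f := by
  refine ENNReal.le_of_forall_pos_le_add fun ε hε hfin => ?_
  obtain ⟨hu_fin, hv_fin⟩ := ENNReal.add_lt_top.1 hfin
  have hε2 : (ε / 2 : ℝ≥0∞) ≠ 0 := by simpa using hε.ne'
  refine limsup_le_of_le (by isBoundedDefault) ?_
  filter_upwards [eventually_lt_of_limsup_lt (ENNReal.lt_add_right hu_fin.ne hε2),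
    eventually_lt_of_limsup_lt (ENNReal.lt_add_right hv_fin.ne hε2)] with y hu hv
  calc u y + v y ≤ (limsup u f + ε / 2) + (limsup v f + ε / 2) := add_le_add hu.le hv.le
    _ = limsup u f + limsup v f + ε := by rw [add_add_add_comm, ENNReal.add_halves]

section pLip

variable {X Y Z W : Type*} [MetricSpace X] {x : X}

theorem pLip_le_add_of_edist_le [MetricSpace Y] [MetricSpace Z] [MetricSpace W]
    {g : X → Y} {h₁ : X → Z} {h₂ : X → W}
    (hle : ∀ y, edist (g x) (g y) ≤ edist (h₁ x) (h₁ y) + edist (h₂ x) (h₂ y)) :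
    pLip g x ≤ pLip h₁ x + pLip h₂ x := by
  refine (limsup_le_limsup (Eventually.of_forall fun y => ?_)).trans
    (ENNReal.limsup_add_le' _ _)
  simpa only [Pi.add_apply, ← ENNReal.add_div] using ENNReal.div_le_div_right (hle y) _

theorem pLip_add_le [NormedAddCommGroup Y] (g h : X → Y) :
    pLip (fun y => g y + h y) x ≤ pLip g x + pLip h x :=
  pLip_le_add_of_edist_le fun _ => edist_add_add_le _ _ _ _

theorem pLip_sub_le [NormedAddCommGroup Y] (g h : X → Y) :
    pLip (fun y => g y - h y) x ≤ pLip g x + pLip h x :=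
  pLip_le_add_of_edist_le fun y => by
    simpa only [sub_eq_add_neg, edist_neg_neg] using edist_add_add_le (g x) (-h x) (g y) (-h y)

theorem pLip_le_of_lipschitzWith [MetricSpace Y] {g : X → Y} {K : ℝ≥0}
    (hg : LipschitzWith K g) : pLip g x ≤ K :=
  -- at `y = x` the quotient is `0 / 0 = 0`, so the bound holds for every `y`
  limsup_le_of_le (by isBoundedDefault)
    (Eventually.of_forall fun y => ENNReal.div_le_of_le_mul (hg x y))

theorem LipschitzWith.pLip_comp_le [MetricSpace Y] [MetricSpace Z] {f : Y → Z} {K : ℝ≥0}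
    (hf : LipschitzWith K f) (g : X → Y) :
    pLip (fun y => f (g y)) x ≤ K * pLip g x := by
  rw [pLip, pLip, ← ENNReal.limsup_const_mul_of_ne_top ENNReal.coe_ne_top]
  refine limsup_le_limsup (Eventually.of_forall fun y => ?_)
  dsimp only
  rw [← mul_div_assoc]
  exact ENNReal.div_le_div_right (hf _ _) _

theorem pLip_const_smul {𝕜 : Type*} [NormedField 𝕜] [NormedAddCommGroup Y] [NormedSpace 𝕜 Y]
    (r : 𝕜) (g : X → Y) : pLip (fun y => r • g y) x = ‖r‖ₑ * pLip g x := by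
  rw [pLip, pLip, ← ENNReal.limsup_const_mul_of_ne_top enorm_ne_top]
  simp only [edist_smul₀, ENNReal.smul_def, smul_eq_mul, mul_div_assoc, enorm_eq_nnnorm]

end pLip

theorem exists_pos_mul_enorm_le_of_continuous {V : Type*} [NormedAddCommGroup V]
    [NormedSpace ℝ V] [FiniteDimensional ℝ V] {F : V → ℝ≥0∞} (hF : Continuous F)
    (hsmul : ∀ (r : ℝ) v, F (r • v) = ‖r‖ₑ * F v) (hpos : ∀ v, v ≠ 0 → 0 < F v) :
    ∃ c : ℝ≥0, 0 < c ∧ ∀ v, c * ‖v‖ₑ ≤ F v := by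
  rcases subsingleton_or_nontrivial V with hV | hV
  · exact ⟨1, one_pos, fun v => by simp [Subsingleton.elim v 0]⟩
  obtain ⟨u₀, hu₀, hmin⟩ := (isCompact_sphere (0 : V) 1).exists_isMinOn
    (NormedSpace.sphere_nonempty.2 zero_le_one) hF.continuousOn
  have hFu₀ : 0 < F u₀ := hpos u₀ (ne_zero_of_mem_sphere one_ne_zero ⟨u₀, hu₀⟩)
  refine ⟨(min (F u₀) 1).toNNReal, ENNReal.toNNReal_pos (lt_min hFu₀ one_pos).ne'
    (min_lt_of_right_lt ENNReal.one_lt_top).ne, fun v => ?_⟩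
  rcases eq_or_ne v 0 with rfl | hv
  · simp
  have hu : ‖v‖⁻¹ • v ∈ Metric.sphere (0 : V) 1 := by
    simp [norm_smul, hv]
  calc ((min (F u₀) 1).toNNReal : ℝ≥0∞) * ‖v‖ₑ ≤ F (‖v‖⁻¹ • v) * ‖v‖ₑ := by
        gcongr
        exact ENNReal.coe_toNNReal_le_self.trans ((min_le_left _ _).trans (hmin hu))
    _ = F v := by
        rw [mul_comm, ← enorm_norm v, ← hsmul, smul_smul, mul_inv_cancel₀ (norm_ne_zero_iff.2 hv),
          one_smul]

section CompLinear

variable {X E : Type*} [MetricSpace X] {x : X} [NormedAddCommGroup E] [NormedSpace ℝ E]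
  {φ : X → E}

theorem exists_pos_mul_enorm_le_pLip_dual_comp [FiniteDimensional ℝ E] {K : ℝ≥0}
    (hφ : LipschitzWith K φ)
    (hnd : ∀ ℓ : StrongDual ℝ E, ℓ ≠ 0 → 0 < pLip (fun y => ℓ (φ y)) x) :
    ∃ c : ℝ≥0, 0 < c ∧ ∀ ℓ : StrongDual ℝ E, c * ‖ℓ‖ₑ ≤ pLip (fun y => ℓ (φ y)) x := by
  refine exists_pos_mul_enorm_le_of_continuous
    (continuous_of_le_add_edist K ENNReal.coe_ne_top fun ℓ m => ?_)
    (fun r ℓ => pLip_const_smul r _) hnd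
  calc pLip (fun y => ℓ (φ y)) x = pLip (fun y => m (φ y) + (ℓ - m) (φ y)) x := by simp
    _ ≤ pLip (fun y => m (φ y)) x + pLip (fun y => (ℓ - m) (φ y)) x := pLip_add_le _ _
    _ ≤ pLip (fun y => m (φ y)) x + K * edist ℓ m := by
        gcongr
        calc pLip (fun y => (ℓ - m) (φ y)) x ≤ (‖ℓ - m‖₊ * K : ℝ≥0) :=
              pLip_le_of_lipschitzWith ((ℓ - m).lipschitz.comp hφ)
          _ = K * edist ℓ m := by rw [edist_eq_enorm_sub, enorm_eq_nnnorm]; push_cast; ring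

theorem mul_enorm_le_pLip_comp {Y : Type*} [NormedAddCommGroup Y] [NormedSpace ℝ Y] {c : ℝ≥0}
    (hc : ∀ ℓ : StrongDual ℝ E, c * ‖ℓ‖ₑ ≤ pLip (fun y => ℓ (φ y)) x) (T : E →L[ℝ] Y) :
    c * ‖T‖ₑ ≤ pLip (fun y => T (φ y)) x := by
  have hcT : (c : ℝ≥0∞) * ‖T‖ₑ = ‖(c : ℝ) • T‖ₑ := by simp [enorm_smul]
  rw [hcT]
  refine ContinuousLinearMap.opENorm_le_bound _ fun u => ?_
  obtain ⟨ξ, hξ, hξu⟩ := exists_dual_vector'' ℝ (T u)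
  calc ‖((c : ℝ) • T) u‖ₑ = c * ‖ξ (T u)‖ₑ := by simp [hξu, enorm_smul]
    _ ≤ c * (‖ξ.comp T‖ₑ * ‖u‖ₑ) := by gcongr; exact (ξ.comp T).le_opENorm u
    _ ≤ pLip (fun y => ξ (T (φ y))) x * ‖u‖ₑ := by rw [← mul_assoc]; gcongr; exact hc _
    _ ≤ pLip (fun y => T (φ y)) x * ‖u‖ₑ := by
        gcongr
        exact (ξ.lipschitz.pLip_comp_le _).trans
          (mul_le_of_le_one_left zero_le (by exact_mod_cast hξ))

theorem continuous_pLip_sub_clm_comp {Y : Type*} [NormedAddCommGroup Y] [NormedSpace ℝ Y]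
    {K : ℝ≥0} (hφ : LipschitzWith K φ) (f : X → Y) :
    Continuous fun T : E →L[ℝ] Y => pLip (fun y => f y - T (φ y)) x := by
  refine continuous_of_le_add_edist K ENNReal.coe_ne_top fun S T => ?_
  calc pLip (fun y => f y - S (φ y)) x
        = pLip (fun y => (f y - T (φ y)) + (T - S) (φ y)) x := by
          congr 1; ext y; simp only [sub_apply]; abel
    _ ≤ pLip (fun y => f y - T (φ y)) x + pLip (fun y => (T - S) (φ y)) x := pLip_add_le _ _
    _ ≤ pLip (fun y => f y - T (φ y)) x + K * edist S T := by
        gcongr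
        calc pLip (fun y => (T - S) (φ y)) x ≤ (‖T - S‖₊ * K : ℝ≥0) :=
              pLip_le_of_lipschitzWith ((T - S).lipschitz.comp hφ)
          _ = K * edist S T := by
              rw [edist_comm, edist_eq_enorm_sub, enorm_eq_nnnorm]; push_cast; ring

end CompLinear

theorem exists_unique_eq_zero_of_mul_edist_le {M : Type*} [EMetricSpace M] [CompleteSpace M]
    {G : M → ℝ≥0∞} (hG : Continuous G) {c : ℝ≥0} (hc : 0 < c)
    (hdist : ∀ S T, c * edist S T ≤ G S + G T) (hinf : ⨅ T, G T = 0) :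
    ∃! T, G T = 0 := by
  have hc0 : (c : ℝ≥0∞) ≠ 0 := by exact_mod_cast hc.ne'
  have hseq : ∀ k : ℕ, ∃ T, G T < c * 2⁻¹ ^ k := fun k =>
    iInf_lt_iff.1 (hinf ▸ ENNReal.mul_pos hc0 (pow_ne_zero _ (by simp)))
  choose u hu using hseq
  have hGu : Tendsto (fun k => G (u k)) atTop (𝓝 0) := by
    have := ENNReal.Tendsto.const_mul (ENNReal.tendsto_pow_atTop_nhds_zero_of_lt_one
      (r := 2⁻¹) (by norm_num)) (Or.inr (ENNReal.coe_ne_top (r := c)))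
    rw [mul_zero] at this
    exact tendsto_of_tendsto_of_tendsto_of_le_of_le tendsto_const_nhds this
      (fun _ => zero_le) fun k => (hu k).le
  have hcauchy : CauchySeq u := by
    refine cauchySeq_of_edist_le_geometric 2⁻¹ 2 (by norm_num)
      ENNReal.ofNat_ne_top fun k => (ENNReal.mul_le_mul_iff_right hc0 ENNReal.coe_ne_top).1 ?_
    calc c * edist (u k) (u (k + 1)) ≤ G (u k) + G (u (k + 1)) := hdist _ _
      _ ≤ c * 2⁻¹ ^ k + c * 2⁻¹ ^ k := by
          gcongr
          · exact (hu k).le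
          · exact (hu (k + 1)).le.trans
              (mul_le_mul_right (pow_le_pow_of_le_one zero_le (by norm_num) k.le_succ) _)
      _ = c * (2 * 2⁻¹ ^ k) := by ring
  obtain ⟨T, hT⟩ := cauchySeq_tendsto_of_complete hcauchy
  have hGT : G T = 0 := tendsto_nhds_unique ((hG.tendsto T).comp hT) hGu
  refine ⟨T, hGT, fun S hS => ?_⟩
  have := hdist S T
  rw [hS, hGT, add_zero, nonpos_iff_eq_zero, mul_eq_zero] at this
  exact edist_eq_zero.1 (this.resolve_left hc0)

/-- If `φ : X → ℝⁿ` is Lipschitz, nondegenerate at `x`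
(`Lip(⟨v,φ⟩; x) > 0` for all `v ≠ 0`), `Y` is a Banach space, and for every `ε > 0` there
is a linear `T_ε` with `Lip(f − T_ε ∘ φ; x) ≤ ε`, then there is a unique linear `T` with
`Lip(f − T ∘ φ; x) = 0`. -/
theorem stmt16 {X : Type*} [MetricSpace X] (x : X) (n : ℕ)
    (φ : X → EuclideanSpace ℝ (Fin n)) (K : ℝ≥0) (hφ : LipschitzWith K φ)
    (hnd : ∀ v : EuclideanSpace ℝ (Fin n), v ≠ 0 →
      0 < pLip (fun y => (inner ℝ v (φ y) : ℝ)) x)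
    {Y : Type*} [NormedAddCommGroup Y] [NormedSpace ℝ Y] [CompleteSpace Y]
    (f : X → Y)
    (h : ∀ ε : ℝ, 0 < ε → ∃ T : EuclideanSpace ℝ (Fin n) →L[ℝ] Y,
      pLip (fun y => f y - T (φ y)) x ≤ ENNReal.ofReal ε) :
    ∃! T : EuclideanSpace ℝ (Fin n) →L[ℝ] Y,
      pLip (fun y => f y - T (φ y)) x = 0 := by
  have hnd_dual : ∀ ℓ : StrongDual ℝ (EuclideanSpace ℝ (Fin n)), ℓ ≠ 0 →
      0 < pLip (fun y => ℓ (φ y)) x := fun ℓ hℓ => by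
    simpa only [InnerProductSpace.toDual_symm_apply] using
      hnd ((InnerProductSpace.toDual ℝ _).symm ℓ) (by simpa using hℓ)
  obtain ⟨c, hc, hcℓ⟩ := exists_pos_mul_enorm_le_pLip_dual_comp hφ hnd_dual
  refine exists_unique_eq_zero_of_mul_edist_le (continuous_pLip_sub_clm_comp hφ f) hc
    (fun S T => ?_) ?_
  · calc (c : ℝ≥0∞) * edist S T = c * ‖S - T‖ₑ := by rw [edist_eq_enorm_sub]
      _ ≤ pLip (fun y => (S - T) (φ y)) x := mul_enorm_le_pLip_comp hcℓ _
      _ = pLip (fun y => (f y - T (φ y)) - (f y - S (φ y))) x := by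
          congr 1; ext y; simp only [sub_apply]; abel
      _ ≤ _ := (pLip_sub_le _ _).trans_eq (add_comm _ _)
  · refine le_antisymm (ENNReal.le_of_forall_pos_le_add fun ε hε _ => ?_) zero_le
    obtain ⟨T, hT⟩ := h ε hε
    simpa using (iInf_le _ T).trans (hT.trans_eq ENNReal.ofReal_coe_nnreal)
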